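/- In ℝ⁴ with standard basis e₁, e₂, e₃, e₄, let α₁ = e₂ − e₃, α₂ = e₃ − e₄, α₃ = e₄, α₄ = (e₁ − e₂ − e₃ − e₄)/2, and let W ≤ O(ℝ⁴) be the group generated by the four orthogonal reflections s_{α_i}, where s_v(x) = x − 2(⟨v,x⟩/⟨v,v⟩)v (W is the Weyl group of type F₄). Let λ, y lie in the closed Weyl chamber C̄ = {x ∈ ℝ⁴ : x₁ ≥ x₂ + x₃ + x₄ and x₂ ≥ x₃ ≥ x₄ ≥ 0}. Then for every w ∈ W, ⟨λ, w y⟩ = ⟨λ, y⟩ if and only if there exist w₁, w₂ ∈ W with w₁ λ = λ, w₂ y = y and w = w₁ ∘ w₂. (This is the Killing-max property for the root system F₄.) -/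

import Mathlib

open scoped RealInnerProductSpace

noncomputable section

/-- Standard basis vectors of `ℝ⁴`. -/
def eb (i : Fin 4) : EuclideanSpace ℝ (Fin 4) := EuclideanSpace.single i 1

/-- The simple roots `α₁ = e₂ − e₃`, `α₂ = e₃ − e₄`, `α₃ = e₄`,
`α₄ = (e₁ − e₂ − e₃ − e₄)/2` of `F₄` (zero-based indexing of the basis). -/
def alphaF4 : Fin 4 → EuclideanSpace ℝ (Fin 4) :=
  ![eb 1 - eb 2, eb 2 - eb 3, eb 3, (1 / 2 : ℝ) • (eb 0 - eb 1 - eb 2 - eb 3)]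

/-- The Weyl group of type `F₄`: the subgroup of the orthogonal group of `ℝ⁴` generated by
the four reflections `s_{αᵢ}`, `s_v x = x − 2(⟪v,x⟫/⟪v,v⟫) v`. -/
def WF4 : Subgroup (EuclideanSpace ℝ (Fin 4) ≃ₗᵢ[ℝ] EuclideanSpace ℝ (Fin 4)) :=
  Subgroup.closure
    {w | ∃ i : Fin 4, ∀ x : EuclideanSpace ℝ (Fin 4),
      w x = x - (2 * ⟪alphaF4 i, x⟫ / ⟪alphaF4 i, alphaF4 i⟫) • alphaF4 i}

/-!
Let `δ` be a vector pairing nonzero with every root, and call a root positive when it pairs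
positively with `δ`. We induct on the number of positive roots that `w⁻¹` makes negative.
If `w ≠ 1`, the exchange condition gives a simple root `αᵢ` with `w⁻¹ αᵢ` negative, and
`w' = s_{αᵢ} w` has one such root fewer. Then
`⟪λ, w y⟫ = ⟪λ, w' y⟫ - c t` with `c = 2⟪αᵢ, λ⟫ / ⟪αᵢ, αᵢ⟫ ≥ 0` and `t = ⟪αᵢ, w' y⟫ ≥ 0`
(`-w⁻¹ αᵢ` is a positive root, hence a nonnegative combination of simple roots), so
`⟪λ, w y⟫ ≤ ⟪λ, y⟫`; under equality `c t = 0`, so `s_{αᵢ}` fixes `λ` or `w' y`, and the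
factorisation of `w'` given by induction yields one of `w`. For `F₄` the required properties
of the simple system are finitely many integer checks on the 48 roots.
-/

open Finset

section ReflectionGroups

variable {ι E : Type*} [NormedAddCommGroup E] [InnerProductSpace ℝ E]

def rootReflection (v : E) : E ≃ₗᵢ[ℝ] E := Submodule.reflection (ℝ ∙ v)ᗮ

theorem rootReflection_apply (v x : E) :
    rootReflection v x = x - (2 * ⟪v, x⟫ / ⟪v, v⟫) • v := by
  rw [rootReflection, Submodule.reflection_orthogonal_apply, Submodule.reflection_singleton_apply]
  simp only [RCLike.ofReal_real_eq_id, id_eq, ← real_inner_self_eq_norm_sq, two_smul, two_mul,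
    add_div, add_smul]
  abel

@[simp]
theorem rootReflection_self (v : E) : rootReflection v v = -v :=
  Submodule.reflection_orthogonalComplement_singleton_eq_neg v

@[simp]
theorem rootReflection_rootReflection (v x : E) : rootReflection v (rootReflection v x) = x :=
  Submodule.reflection_reflection _ x

@[simp]
theorem rootReflection_mul_self (v : E) : rootReflection v * rootReflection v = 1 :=
  Submodule.reflection_mul_reflection _

@[simp]
theorem rootReflection_inv (v : E) : (rootReflection v)⁻¹ = rootReflection v :=
  Submodule.reflection_inv

theorem rootReflection_apply_of_inner_eq_zero {v x : E} (h : ⟪v, x⟫ = 0) :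
    rootReflection v x = x := by
  simp [rootReflection_apply, h]

theorem inner_rootReflection_right (v x y : E) :
    ⟪x, rootReflection v y⟫ = ⟪x, y⟫ - (2 * ⟪v, x⟫ / ⟪v, v⟫) * ⟪v, y⟫ := by
  rw [← (rootReflection v).inner_map_map, rootReflection_rootReflection, rootReflection_apply,
    inner_sub_left, real_inner_smul_left]

theorem rootReflection_map (u : E ≃ₗᵢ[ℝ] E) (v : E) :
    rootReflection (u v) * u = u * rootReflection v := by
  ext x
  simp only [LinearIsometryEquiv.coe_mul, Function.comp_apply, rootReflection_apply, map_sub,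
    map_smul, u.inner_map_map]

def weylGroup (α : ι → E) : Subgroup (E ≃ₗᵢ[ℝ] E) :=
  Subgroup.closure (Set.range fun i => rootReflection (α i))

theorem rootReflection_mem_weylGroup (α : ι → E) (i : ι) : rootReflection (α i) ∈ weylGroup α :=
  Subgroup.subset_closure ⟨i, rfl⟩

def wordProd (α : ι → E) (l : List ι) : E ≃ₗᵢ[ℝ] E :=
  (l.map fun i => rootReflection (α i)).prod

@[simp]
theorem wordProd_nil (α : ι → E) : wordProd α [] = 1 := rfl

@[simp]
theorem wordProd_cons (α : ι → E) (i : ι) (l : List ι) :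
    wordProd α (i :: l) = rootReflection (α i) * wordProd α l := List.prod_cons

@[simp]
theorem wordProd_singleton (α : ι → E) (i : ι) : wordProd α [i] = rootReflection (α i) :=
  List.prod_singleton

@[simp]
theorem wordProd_append (α : ι → E) (l l' : List ι) :
    wordProd α (l ++ l') = wordProd α l * wordProd α l' := by
  simp [wordProd]

theorem exists_wordProd_eq {α : ι → E} {w : E ≃ₗᵢ[ℝ] E} (hw : w ∈ weylGroup α) :
    ∃ l, wordProd α l = w := by
  induction hw using Subgroup.closure_induction'' with
  | mem _ hx =>
    obtain ⟨i, rfl⟩ := hx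
    exact ⟨[i], by simp⟩
  | inv_mem _ hx =>
    obtain ⟨i, rfl⟩ := hx
    exact ⟨[i], by simp⟩
  | one => exact ⟨[], rfl⟩
  | mul _ _ _ _ hx hy =>
    obtain ⟨l, rfl⟩ := hx
    obtain ⟨l', rfl⟩ := hy
    exact ⟨l ++ l', wordProd_append α l l'⟩

def closedChamber (α : ι → E) : Set E := {y | ∀ i, 0 ≤ ⟪α i, y⟫}

open Classical in
def inversions (Φ : Finset E) (δ : E) (w : E ≃ₗᵢ[ℝ] E) : Finset E :=
  {β ∈ Φ | 0 < ⟪δ, β⟫ ∧ ⟪δ, w β⟫ < 0}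

theorem mem_inversions {Φ : Finset E} {δ β : E} {w : E ≃ₗᵢ[ℝ] E} :
    β ∈ inversions Φ δ w ↔ β ∈ Φ ∧ 0 < ⟪δ, β⟫ ∧ ⟪δ, w β⟫ < 0 := by
  classical
  simp [inversions]

variable [Fintype ι]

structure IsSimpleSystem (Φ : Finset E) (α : ι → E) (δ : E) : Prop where
  mem : ∀ i, α i ∈ Φ
  inner_pos : ∀ i, 0 < ⟪δ, α i⟫
  inner_ne_zero : ∀ β ∈ Φ, ⟪δ, β⟫ ≠ 0
  rootReflection_mem : ∀ i, ∀ β ∈ Φ, rootReflection (α i) β ∈ Φ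
  inner_rootReflection_pos :
    ∀ i, ∀ β ∈ Φ, 0 < ⟪δ, β⟫ → β ≠ α i → 0 < ⟪δ, rootReflection (α i) β⟫
  exists_nonneg_coeffs :
    ∀ β ∈ Φ, 0 < ⟪δ, β⟫ → ∃ c : ι → ℝ, (∀ i, 0 ≤ c i) ∧ β = ∑ i, c i • α i

namespace IsSimpleSystem

variable {Φ : Finset E} {α : ι → E} {δ : E} (h : IsSimpleSystem Φ α δ)
include h

theorem wordProd_apply_mem (l : List ι) {β : E} (hβ : β ∈ Φ) : wordProd α l β ∈ Φ := by
  induction l with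
  | nil => exact hβ
  | cons i l ih => exact h.rootReflection_mem i _ ih

theorem apply_mem {w : E ≃ₗᵢ[ℝ] E} (hw : w ∈ weylGroup α) {β : E} (hβ : β ∈ Φ) : w β ∈ Φ := by
  obtain ⟨l, rfl⟩ := exists_wordProd_eq hw
  exact h.wordProd_apply_mem l hβ

theorem inner_pos_of_not_neg {β : E} (hβ : β ∈ Φ) (hneg : ¬⟪δ, β⟫ < 0) : 0 < ⟪δ, β⟫ :=
  lt_of_le_of_ne (not_lt.1 hneg) (h.inner_ne_zero β hβ).symm

theorem inner_nonneg_of_mem_closedChamber {β y : E} (hβ : β ∈ Φ) (hpos : 0 < ⟪δ, β⟫)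
    (hy : y ∈ closedChamber α) : 0 ≤ ⟪β, y⟫ := by
  obtain ⟨c, hc, rfl⟩ := h.exists_nonneg_coeffs β hβ hpos
  rw [sum_inner]
  exact sum_nonneg fun i _ => by
    rw [real_inner_smul_left]
    exact mul_nonneg (hc i) (hy i)

theorem eq_of_inner_rootReflection_neg {β : E} {i : ι} (hβ : β ∈ Φ) (hpos : 0 < ⟪δ, β⟫)
    (hneg : ⟪δ, rootReflection (α i) β⟫ < 0) : β = α i := by
  by_contra hne
  exact (h.inner_rootReflection_pos i β hβ hpos hne).not_gt hneg

theorem exists_wordProd_eq_mul (l : List ι) {i : ι} (hi : ⟪δ, wordProd α l (α i)⟫ < 0) :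
    ∃ l', l'.length < l.length ∧ wordProd α l' = wordProd α l * rootReflection (α i) := by
  induction l with
  | nil => exact absurd hi (h.inner_pos i).not_gt
  | cons j l ih =>
    by_cases hl : ⟪δ, wordProd α l (α i)⟫ < 0
    · obtain ⟨l', hlen, hl'⟩ := ih hl
      exact ⟨j :: l', by simpa using hlen, by simp [hl', mul_assoc]⟩
    · have hroot : wordProd α l (α i) = α j :=
        h.eq_of_inner_rootReflection_neg (h.wordProd_apply_mem l (h.mem i))
          (h.inner_pos_of_not_neg (h.wordProd_apply_mem l (h.mem i)) hl) (by simpa using hi)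
      refine ⟨l, by simp, ?_⟩
      rw [wordProd_cons, mul_assoc, ← rootReflection_map, hroot, ← mul_assoc,
        rootReflection_mul_self, one_mul]

theorem wordProd_eq_one_of_forall_inner_pos (l : List ι)
    (hpos : ∀ i, 0 < ⟪δ, wordProd α l (α i)⟫) : wordProd α l = 1 := by
  induction hn : l.length using Nat.strong_induction_on generalizing l with
  | _ n ih =>
  rcases l.eq_nil_or_concat' with rfl | ⟨l, j, rfl⟩
  · rfl
  have hj : ⟪δ, wordProd α l (α j)⟫ < 0 := by
    simpa using hpos j
  obtain ⟨l', hlen, hl'⟩ := h.exists_wordProd_eq_mul l hj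
  have hprod : wordProd α (l ++ [j]) = wordProd α l' := by
    rw [hl', wordProd_append, wordProd_singleton]
  rw [hprod] at hpos ⊢
  exact ih l'.length (by simp at hn; omega) l' hpos rfl

theorem exists_inner_neg_of_ne_one {w : E ≃ₗᵢ[ℝ] E} (hw : w ∈ weylGroup α) (hw1 : w ≠ 1) :
    ∃ i, ⟪δ, w (α i)⟫ < 0 := by
  obtain ⟨l, rfl⟩ := exists_wordProd_eq hw
  by_contra! hnonneg
  exact hw1 (h.wordProd_eq_one_of_forall_inner_pos l fun i =>
    h.inner_pos_of_not_neg (h.wordProd_apply_mem l (h.mem i)) (hnonneg i).not_gt)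

theorem card_inversions_mul_rootReflection_add_one {w : E ≃ₗᵢ[ℝ] E} {i : ι}
    (hi : ⟪δ, w (α i)⟫ < 0) :
    #(inversions Φ δ (w * rootReflection (α i))) + 1 = #(inversions Φ δ w) := by
  classical
  have hαi : α i ∈ inversions Φ δ w := mem_inversions.2 ⟨h.mem i, h.inner_pos i, hi⟩
  have hne {β : E} (hβ : 0 < ⟪δ, β⟫) (hneg : ⟪δ, w (rootReflection (α i) β)⟫ < 0) : β ≠ α i := by
    rintro rfl
    simp only [rootReflection_self, map_neg, inner_neg_right] at hneg
    linarith
  rw [← card_erase_add_one hαi]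
  congr 1
  refine card_nbij' (rootReflection (α i)) (rootReflection (α i)) ?_ ?_
    (fun β _ => rootReflection_rootReflection _ β) (fun β _ => rootReflection_rootReflection _ β)
  · intro β hβ
    obtain ⟨hβΦ, hpos, hneg⟩ := mem_inversions.1 hβ
    simp only [LinearIsometryEquiv.coe_mul, Function.comp_apply] at hneg
    refine mem_erase.2 ⟨fun heq => ?_, mem_inversions.2 ⟨h.rootReflection_mem i β hβΦ,
      h.inner_rootReflection_pos i β hβΦ hpos (hne hpos hneg), hneg⟩⟩
    rw [← rootReflection_rootReflection (α i) β, heq, rootReflection_self, inner_neg_right] at hpos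
    linarith [h.inner_pos i]
  · intro β hβ
    obtain ⟨hβi, hβ⟩ := mem_erase.1 hβ
    obtain ⟨hβΦ, hpos, hneg⟩ := mem_inversions.1 hβ
    refine mem_inversions.2 ⟨h.rootReflection_mem i β hβΦ,
      h.inner_rootReflection_pos i β hβΦ hpos hβi, by simpa using hneg⟩

theorem inner_rootReflection_mul_nonneg {w : E ≃ₗᵢ[ℝ] E} (hw : w ∈ weylGroup α) {i : ι}
    (hi : ⟪δ, w⁻¹ (α i)⟫ < 0) {y : E} (hy : y ∈ closedChamber α) :
    0 ≤ ⟪α i, (rootReflection (α i) * w) y⟫ := by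
  have hmem : (w⁻¹ * rootReflection (α i)) (α i) ∈ Φ :=
    h.apply_mem (mul_mem (inv_mem hw) (rootReflection_mem_weylGroup α i)) (h.mem i)
  have hpos : 0 < ⟪δ, (w⁻¹ * rootReflection (α i)) (α i)⟫ := by
    simpa using hi
  calc 0 ≤ ⟪(w⁻¹ * rootReflection (α i)) (α i), y⟫ :=
        h.inner_nonneg_of_mem_closedChamber hmem hpos hy
    _ = ⟪α i, (rootReflection (α i) * w) y⟫ := by
        rw [LinearIsometryEquiv.inner_map_eq_flip, ← LinearIsometryEquiv.coe_inv, mul_inv_rev,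
          inv_inv, rootReflection_inv]

theorem inner_le_and_exists_of_inner_eq {lam y : E} (hlam : lam ∈ closedChamber α)
    (hy : y ∈ closedChamber α) {w : E ≃ₗᵢ[ℝ] E} (hw : w ∈ weylGroup α) :
    ⟪lam, w y⟫ ≤ ⟪lam, y⟫ ∧ (⟪lam, w y⟫ = ⟪lam, y⟫ → ∃ w₁ ∈ weylGroup α, ∃ w₂ ∈ weylGroup α,
      w₁ lam = lam ∧ w₂ y = y ∧ w = w₁ * w₂) := by
  induction hn : #(inversions Φ δ w⁻¹) using Nat.strong_induction_on generalizing w with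
  | _ n ih =>
  rcases eq_or_ne w 1 with rfl | hw1
  · exact ⟨le_rfl, fun _ => ⟨1, one_mem _, 1, one_mem _, rfl, rfl, (mul_one 1).symm⟩⟩
  obtain ⟨i, hi⟩ := h.exists_inner_neg_of_ne_one (inv_mem hw) (inv_ne_one.2 hw1)
  set s := rootReflection (α i)
  have hs : s ∈ weylGroup α := rootReflection_mem_weylGroup α i
  have hcard : #(inversions Φ δ (s * w)⁻¹) < n := by
    have := h.card_inversions_mul_rootReflection_add_one hi
    rw [mul_inv_rev, rootReflection_inv]
    omega
  obtain ⟨hle, hdecomp⟩ := ih _ hcard (mul_mem hs hw) rfl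
  set c := 2 * ⟪α i, lam⟫ / ⟪α i, α i⟫
  set t := ⟪α i, (s * w) y⟫
  have hc : 0 ≤ c := div_nonneg (mul_nonneg zero_le_two (hlam i)) real_inner_self_nonneg
  have ht : 0 ≤ t := h.inner_rootReflection_mul_nonneg hw hi hy
  have hw_eq : w = s * (s * w) := by rw [← mul_assoc, rootReflection_mul_self, one_mul]
  have hsplit : ⟪lam, w y⟫ = ⟪lam, (s * w) y⟫ - c * t := by
    conv_lhs => rw [hw_eq]
    exact inner_rootReflection_right (α i) lam ((s * w) y)
  refine ⟨by nlinarith, fun heq => ?_⟩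
  obtain ⟨u₁, hu₁, u₂, hu₂, hu₁lam, hu₂y, hsw⟩ := hdecomp (by nlinarith)
  rcases mul_eq_zero.1 (show c * t = 0 by nlinarith) with hc0 | ht0
  · refine ⟨s * u₁, mul_mem hs hu₁, u₂, hu₂, ?_, hu₂y, by rw [hw_eq, hsw, mul_assoc]⟩
    rw [LinearIsometryEquiv.coe_mul, Function.comp_apply, hu₁lam, rootReflection_apply]
    rw [show 2 * ⟪α i, lam⟫ / ⟪α i, α i⟫ = 0 from hc0, zero_smul, sub_zero]
  · have hwy : w y = u₁ y := by
      rw [hw_eq, LinearIsometryEquiv.coe_mul, Function.comp_apply,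
        rootReflection_apply_of_inner_eq_zero ht0, hsw]
      simp [hu₂y]
    refine ⟨u₁, hu₁, u₁⁻¹ * w, mul_mem (inv_mem hu₁) hw, hu₁lam, ?_, by group⟩
    simp [hwy]

theorem inner_apply_eq_iff {lam y : E} (hlam : lam ∈ closedChamber α) (hy : y ∈ closedChamber α)
    {w : E ≃ₗᵢ[ℝ] E} (hw : w ∈ weylGroup α) :
    ⟪lam, w y⟫ = ⟪lam, y⟫ ↔ ∃ w₁ ∈ weylGroup α, ∃ w₂ ∈ weylGroup α,
      w₁ lam = lam ∧ w₂ y = y ∧ w = w₁ * w₂ := by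
  refine ⟨(h.inner_le_and_exists_of_inner_eq hlam hy hw).2, ?_⟩
  rintro ⟨w₁, -, w₂, -, h₁, h₂, rfl⟩
  rw [LinearIsometryEquiv.coe_mul, Function.comp_apply, h₂]
  conv_lhs => rw [← h₁]
  exact w₁.inner_map_map lam y

end IsSimpleSystem

end ReflectionGroups

section F4

-- An integer vector `a` stands for `a / 2` (see `halfVec`): the roots of `F₄` have
-- half-integral coordinates.

def dotZ (a b : Fin 4 → ℤ) : ℤ := a 0 * b 0 + a 1 * b 1 + a 2 * b 2 + a 3 * b 3

def reflZ (a b : Fin 4 → ℤ) : Fin 4 → ℤ := b - (2 * dotZ a b / dotZ a a) • a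

def simpleZ : Fin 4 → Fin 4 → ℤ :=
  ![![0, 2, -2, 0], ![0, 0, 2, -2], ![0, 0, 0, 2], ![1, -1, -1, -1]]

-- The basis dual to the simple roots: `dotZ (coweightZ i) (simpleZ j) = if i = j then 2 else 0`.
def coweightZ : Fin 4 → Fin 4 → ℤ := ![![1, 1, 0, 0], ![2, 1, 1, 0], ![3, 1, 1, 1], ![2, 0, 0, 0]]

def deltaZ : Fin 4 → ℤ := ![8, 4, 2, 1]

def rootsZ : List (Fin 4 → ℤ) :=
  [![2, 0, 0, 0], ![-2, 0, 0, 0], ![0, 2, 0, 0], ![0, -2, 0, 0],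
   ![0, 0, 2, 0], ![0, 0, -2, 0], ![0, 0, 0, 2], ![0, 0, 0, -2],
   ![2, 2, 0, 0], ![2, -2, 0, 0], ![-2, 2, 0, 0], ![-2, -2, 0, 0],
   ![2, 0, 2, 0], ![2, 0, -2, 0], ![-2, 0, 2, 0], ![-2, 0, -2, 0],
   ![2, 0, 0, 2], ![2, 0, 0, -2], ![-2, 0, 0, 2], ![-2, 0, 0, -2],
   ![0, 2, 2, 0], ![0, 2, -2, 0], ![0, -2, 2, 0], ![0, -2, -2, 0],
   ![0, 2, 0, 2], ![0, 2, 0, -2], ![0, -2, 0, 2], ![0, -2, 0, -2],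
   ![0, 0, 2, 2], ![0, 0, 2, -2], ![0, 0, -2, 2], ![0, 0, -2, -2],
   ![1, 1, 1, 1], ![1, 1, 1, -1], ![1, 1, -1, 1], ![1, 1, -1, -1],
   ![1, -1, 1, 1], ![1, -1, 1, -1], ![1, -1, -1, 1], ![1, -1, -1, -1],
   ![-1, 1, 1, 1], ![-1, 1, 1, -1], ![-1, 1, -1, 1], ![-1, 1, -1, -1],
   ![-1, -1, 1, 1], ![-1, -1, 1, -1], ![-1, -1, -1, 1], ![-1, -1, -1, -1]]

theorem reflZ_simpleZ_mem_rootsZ : ∀ i, ∀ b ∈ rootsZ, reflZ (simpleZ i) b ∈ rootsZ := by decide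

theorem dotZ_simpleZ_dvd :
    ∀ i, ∀ b ∈ rootsZ, dotZ (simpleZ i) (simpleZ i) ∣ 2 * dotZ (simpleZ i) b := by
  decide

theorem simpleZ_mem_rootsZ : ∀ i, simpleZ i ∈ rootsZ := by decide

theorem dotZ_deltaZ_simpleZ_pos : ∀ i, 0 < dotZ deltaZ (simpleZ i) := by decide

theorem dotZ_deltaZ_ne_zero : ∀ b ∈ rootsZ, dotZ deltaZ b ≠ 0 := by decide

theorem dotZ_deltaZ_reflZ_pos : ∀ i, ∀ b ∈ rootsZ, 0 < dotZ deltaZ b → b ≠ simpleZ i →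
    0 < dotZ deltaZ (reflZ (simpleZ i) b) := by decide

theorem dotZ_coweightZ_nonneg :
    ∀ b ∈ rootsZ, 0 < dotZ deltaZ b → ∀ i, 0 ≤ dotZ (coweightZ i) b := by
  decide

theorem two_smul_eq_sum_dotZ_coweightZ_smul (b : Fin 4 → ℤ) :
    (2 : ℤ) • b = ∑ i, dotZ (coweightZ i) b • simpleZ i := by
  funext j
  fin_cases j <;> simp [dotZ, coweightZ, simpleZ, Fin.sum_univ_four] <;> ring

def halfVec : (Fin 4 → ℤ) →+ EuclideanSpace ℝ (Fin 4) where
  toFun a := WithLp.toLp 2 fun j => (a j : ℝ) / 2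
  map_zero' := by ext; simp
  map_add' a b := by ext; simp [add_div]

@[simp]
theorem halfVec_apply (a : Fin 4 → ℤ) (j : Fin 4) : halfVec a j = (a j : ℝ) / 2 := rfl

theorem halfVec_injective : Function.Injective halfVec := fun a b hab => by
  funext j
  simpa using congr($hab j)

theorem inner_halfVec (a b : Fin 4 → ℤ) : ⟪halfVec a, halfVec b⟫ = dotZ a b / 4 := by
  simp only [PiLp.inner_apply, RCLike.inner_apply, conj_trivial, Fin.sum_univ_four, halfVec_apply,
    dotZ]
  push_cast
  ring

theorem inner_halfVec_pos_iff {a b : Fin 4 → ℤ} : 0 < ⟪halfVec a, halfVec b⟫ ↔ 0 < dotZ a b := by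
  rw [inner_halfVec, div_pos_iff_of_pos_right four_pos, Int.cast_pos]

theorem halfVec_zsmul (n : ℤ) (a : Fin 4 → ℤ) : halfVec (n • a) = (n : ℝ) • halfVec a := by
  rw [map_zsmul, Int.cast_smul_eq_zsmul]

theorem halfVec_reflZ {a b : Fin 4 → ℤ} (hdvd : dotZ a a ∣ 2 * dotZ a b) :
    halfVec (reflZ a b) = rootReflection (halfVec a) (halfVec b) := by
  rw [reflZ, map_sub, halfVec_zsmul, rootReflection_apply, inner_halfVec, inner_halfVec,
    Int.cast_div_charZero hdvd]
  congr 2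
  push_cast
  ring

theorem alphaF4_eq_halfVec (i : Fin 4) : alphaF4 i = halfVec (simpleZ i) := by
  fin_cases i <;> ext j <;> fin_cases j <;>
    simp [alphaF4, eb, simpleZ] <;> norm_num

def rootsF4 : Finset (EuclideanSpace ℝ (Fin 4)) := (rootsZ.map halfVec).toFinset

theorem mem_rootsF4 {β : EuclideanSpace ℝ (Fin 4)} :
    β ∈ rootsF4 ↔ ∃ b ∈ rootsZ, halfVec b = β := by
  simp [rootsF4]

theorem isSimpleSystem_rootsF4 : IsSimpleSystem rootsF4 alphaF4 (halfVec deltaZ) where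
  mem i := mem_rootsF4.2 ⟨simpleZ i, simpleZ_mem_rootsZ i, (alphaF4_eq_halfVec i).symm⟩
  inner_pos i := by
    rw [alphaF4_eq_halfVec, inner_halfVec_pos_iff]
    exact dotZ_deltaZ_simpleZ_pos i
  inner_ne_zero β hβ := by
    obtain ⟨b, hb, rfl⟩ := mem_rootsF4.1 hβ
    rw [inner_halfVec]
    exact div_ne_zero (by exact_mod_cast dotZ_deltaZ_ne_zero b hb) four_ne_zero
  rootReflection_mem i β hβ := by
    obtain ⟨b, hb, rfl⟩ := mem_rootsF4.1 hβ
    rw [alphaF4_eq_halfVec, ← halfVec_reflZ (dotZ_simpleZ_dvd i b hb)]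
    exact mem_rootsF4.2 ⟨_, reflZ_simpleZ_mem_rootsZ i b hb, rfl⟩
  inner_rootReflection_pos i β hβ hpos hne := by
    obtain ⟨b, hb, rfl⟩ := mem_rootsF4.1 hβ
    rw [alphaF4_eq_halfVec] at hne ⊢
    rw [← halfVec_reflZ (dotZ_simpleZ_dvd i b hb), inner_halfVec_pos_iff]
    exact dotZ_deltaZ_reflZ_pos i b hb (inner_halfVec_pos_iff.1 hpos)
      (halfVec_injective.ne_iff.1 hne)
  exists_nonneg_coeffs β hβ hpos := by
    obtain ⟨b, hb, rfl⟩ := mem_rootsF4.1 hβ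
    have hc := dotZ_coweightZ_nonneg b hb (inner_halfVec_pos_iff.1 hpos)
    refine ⟨fun i => (dotZ (coweightZ i) b : ℝ) / 2, fun i => by have := hc i; positivity, ?_⟩
    have h2b := congrArg halfVec (two_smul_eq_sum_dotZ_coweightZ_smul b)
    simp only [map_sum, halfVec_zsmul, ← alphaF4_eq_halfVec] at h2b
    rw [Int.cast_two] at h2b
    rw [← inv_smul_smul₀ (two_ne_zero (α := ℝ)) (halfVec b), h2b, smul_sum]
    simp only [smul_smul, inv_mul_eq_div]

theorem WF4_eq_weylGroup : WF4 = weylGroup alphaF4 := by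
  rw [WF4, weylGroup]
  congr 1
  ext w
  exact exists_congr fun i => ⟨fun h => LinearIsometryEquiv.ext fun x =>
    (rootReflection_apply _ x).trans (h x).symm, fun h x => h ▸ rootReflection_apply _ x⟩

theorem mem_closedChamber_alphaF4 {x : EuclideanSpace ℝ (Fin 4)}
    (hx : x 1 + x 2 + x 3 ≤ x 0 ∧ x 2 ≤ x 1 ∧ x 3 ≤ x 2 ∧ 0 ≤ x 3) : x ∈ closedChamber alphaF4 := by
  obtain ⟨h₀, h₁, h₂, h₃⟩ := hx
  intro i
  fin_cases i <;> simp [alphaF4, eb, PiLp.inner_apply, Fin.sum_univ_four] <;> linarith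

end F4

/-- Killing-max property for the root system `F₄`. For `λ, y` in the closed
Weyl chamber `{x : x₁ ≥ x₂ + x₃ + x₄, x₂ ≥ x₃ ≥ x₄ ≥ 0}` and `w` in the Weyl group of `F₄`,
`⟪λ, w y⟫ = ⟪λ, y⟫` iff `w = w₁ ∘ w₂` with `w₁, w₂ ∈ W(F₄)`, `w₁ λ = λ` and `w₂ y = y`. -/
theorem stmt_16 (lam y : EuclideanSpace ℝ (Fin 4))
    (hlam : lam 1 + lam 2 + lam 3 ≤ lam 0 ∧ lam 2 ≤ lam 1 ∧ lam 3 ≤ lam 2 ∧ 0 ≤ lam 3)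
    (hy : y 1 + y 2 + y 3 ≤ y 0 ∧ y 2 ≤ y 1 ∧ y 3 ≤ y 2 ∧ 0 ≤ y 3)
    (w : EuclideanSpace ℝ (Fin 4) ≃ₗᵢ[ℝ] EuclideanSpace ℝ (Fin 4)) (hw : w ∈ WF4) :
    ⟪lam, w y⟫ = ⟪lam, y⟫ ↔
      ∃ w₁ ∈ WF4, ∃ w₂ ∈ WF4, w₁ lam = lam ∧ w₂ y = y ∧ w = w₁ * w₂ := by
  rw [WF4_eq_weylGroup] at hw ⊢
  exact isSimpleSystem_rootsF4.inner_apply_eq_iff (mem_closedChamber_alphaF4 hlam)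
    (mem_closedChamber_alphaF4 hy) hw
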